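/- Let A be a normed division algebra and let a, b ∈ Im A. Then the cross product satisfies a × b = −(b × a), ⟨a × b, a⟩ = 0 and ⟨a × b, b⟩ = 0, and the real part of the product is Re(a*b) = −⟨a,b⟩ • 1; equivalently, a*b = −⟨a,b⟩ • 1 + a × b. -/

import Mathlib

open scoped RealInnerProductSpace

/-- A normed division algebra: a real inner product space with an `ℝ`-bilinear
multiplication (not necessarily associative or commutative), a two-sided
multiplicative identity `one ≠ 0`, satisfying `‖a*b‖ = ‖a‖ * ‖b‖`. -/
structure NormedDivisionAlgebra (A : Type*) [NormedAddCommGroup A] [InnerProductSpace ℝ A] where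
  mul : A →ₗ[ℝ] A →ₗ[ℝ] A
  one : A
  one_ne_zero : one ≠ 0
  one_mul : ∀ a : A, mul one a = a
  mul_one : ∀ a : A, mul a one = a
  norm_mul : ∀ a b : A, ‖mul a b‖ = ‖a‖ * ‖b‖

namespace NormedDivisionAlgebra

variable {A : Type*} [NormedAddCommGroup A] [InnerProductSpace ℝ A]

/-- `Re a`: the orthogonal projection of `a` onto the real part `Re A = ℝ · 1`. -/
noncomputable def re (D : NormedDivisionAlgebra A) (a : A) : A :=
  (⟪a, D.one⟫ / ‖D.one‖ ^ 2) • D.one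

/-- `Im a`: the orthogonal projection of `a` onto the imaginary part `Im A = (ℝ · 1)ᗮ`. -/
noncomputable def im (D : NormedDivisionAlgebra A) (a : A) : A := a - D.re a

/-- The conjugate `conj a = Re a - Im a`. -/
noncomputable def conj (D : NormedDivisionAlgebra A) (a : A) : A := D.re a - D.im a

/-- The real part `Re A = ℝ · 1` as a submodule. -/
def ReSub (D : NormedDivisionAlgebra A) : Submodule ℝ A := Submodule.span ℝ {D.one}

/-- The imaginary part `Im A = (ℝ · 1)ᗮ` as a submodule. -/
noncomputable def ImSub (D : NormedDivisionAlgebra A) : Submodule ℝ A := (Submodule.span ℝ {D.one})ᗮ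

/-- The commutator `[a, b] = a*b - b*a`. -/
def comm (D : NormedDivisionAlgebra A) (a b : A) : A := D.mul a b - D.mul b a

/-- The associator `[a, b, c] = (a*b)*c - a*(b*c)`. -/
def assoc (D : NormedDivisionAlgebra A) (a b c : A) : A :=
  D.mul (D.mul a b) c - D.mul a (D.mul b c)

/-- The cross product `a × b = Im (a*b)` (intended for `a, b ∈ Im A`). -/
noncomputable def cross (D : NormedDivisionAlgebra A) (a b : A) : A := D.im (D.mul a b)

end NormedDivisionAlgebra

/-!
Polarizing the composition law `‖a * b‖ = ‖a‖ * ‖b‖` in each factor gives the exchange identity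
`⟪a * b, c * d⟫ + ⟪a * d, c * b⟫ = 2 * ⟪a, c⟫ * ⟪b, d⟫`. Putting `1` into some of its slots
computes `⟪a * b, 1⟫`, `⟪a * b, a⟫`, `⟪a * b, b⟫` and `a * b + b * a` through inner products
alone; for imaginary `a, b` these say `Re (a * b) = -⟪a, b⟫`, `a * b ⊥ a, b` and
`a * b + b * a = -2 ⟪a, b⟫`, from which the cross product identities follow.
-/

namespace NormedDivisionAlgebra

variable {A : Type*} [NormedAddCommGroup A] [InnerProductSpace ℝ A] (D : NormedDivisionAlgebra A)

theorem norm_one : ‖D.one‖ = 1 := by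
  have h := D.norm_mul D.one D.one
  rw [D.one_mul] at h
  have hpos : 0 < ‖D.one‖ := norm_pos_iff.mpr D.one_ne_zero
  nlinarith

theorem re_apply (x : A) : D.re x = ⟪x, D.one⟫ • D.one := by
  rw [re, D.norm_one, one_pow, div_one]

theorem re_add_im (x : A) : D.re x + D.im x = x := by
  rw [im, add_sub_cancel]

variable {D} in
theorem inner_one_eq_zero_of_mem_ImSub {a : A} (ha : a ∈ D.ImSub) : ⟪a, D.one⟫ = 0 :=
  real_inner_comm a D.one ▸ (Submodule.mem_orthogonal_singleton_iff_inner_right).mp ha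

theorem inner_mul_mul_self (a b : A) : ⟪D.mul a b, D.mul a b⟫ = ⟪a, a⟫ * ⟪b, b⟫ := by
  simp only [real_inner_self_eq_norm_sq, D.norm_mul, mul_pow]

theorem inner_mul_mul_left (a b d : A) : ⟪D.mul a b, D.mul a d⟫ = ⟪a, a⟫ * ⟪b, d⟫ := by
  have h := D.inner_mul_mul_self a (b + d)
  simp only [map_add, inner_add_left, inner_add_right, D.inner_mul_mul_self,
    real_inner_comm (D.mul a b), real_inner_comm b] at h
  linear_combination h / 2

theorem inner_mul_mul_right (a c b : A) : ⟪D.mul a b, D.mul c b⟫ = ⟪a, c⟫ * ⟪b, b⟫ := by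
  have h := D.inner_mul_mul_self (a + c) b
  simp only [map_add, LinearMap.add_apply, inner_add_left, inner_add_right, D.inner_mul_mul_self,
    real_inner_comm (D.mul a b), real_inner_comm a] at h
  linear_combination h / 2

theorem inner_mul_mul_add_inner_mul_mul (a b c d : A) :
    ⟪D.mul a b, D.mul c d⟫ + ⟪D.mul a d, D.mul c b⟫ = 2 * ⟪a, c⟫ * ⟪b, d⟫ := by
  have h := D.inner_mul_mul_right a c (b + d)
  simp only [map_add, inner_add_left, inner_add_right, D.inner_mul_mul_right,
    real_inner_comm b d] at h
  linear_combination h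

theorem inner_mul_one (a b : A) : ⟪D.mul a b, D.one⟫ = 2 * ⟪a, D.one⟫ * ⟪b, D.one⟫ - ⟪a, b⟫ := by
  have h := D.inner_mul_mul_add_inner_mul_mul a b D.one D.one
  rw [D.one_mul, D.one_mul, D.mul_one] at h
  linear_combination h

theorem inner_mul_left_self (a b : A) : ⟪D.mul a b, a⟫ = ⟪a, a⟫ * ⟪b, D.one⟫ := by
  simpa only [D.mul_one] using D.inner_mul_mul_left a b D.one

theorem inner_mul_right_self (a b : A) : ⟪D.mul a b, b⟫ = ⟪a, D.one⟫ * ⟪b, b⟫ := by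
  simpa only [D.one_mul] using D.inner_mul_mul_right a D.one b

theorem mul_add_mul_swap (a b : A) :
    D.mul a b + D.mul b a =
      (2 * ⟪b, D.one⟫) • a + (2 * ⟪a, D.one⟫) • b - (2 * ⟪a, b⟫) • D.one := by
  refine ext_inner_right ℝ fun x => ?_
  have hab := D.inner_mul_mul_add_inner_mul_mul a b x D.one
  have hba := D.inner_mul_mul_add_inner_mul_mul b a x D.one
  have hx := D.inner_mul_mul_add_inner_mul_mul x b D.one a
  simp only [D.one_mul, D.mul_one] at hab hba hx
  simp only [inner_add_left, inner_sub_left, inner_smul_left, RCLike.conj_to_real]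
  rw [real_inner_comm (D.mul x b) a] at hab
  rw [real_inner_comm (D.mul x a) b] at hba
  rw [real_inner_comm a b, real_inner_comm D.one x] at hx
  linear_combination hab + hba - hx

section Imaginary

variable {D} {a b : A}

theorem re_mul_of_mem_ImSub (ha : a ∈ D.ImSub) (b : A) :
    D.re (D.mul a b) = (-⟪a, b⟫) • D.one := by
  rw [re_apply, inner_mul_one, inner_one_eq_zero_of_mem_ImSub ha, mul_zero, zero_mul, zero_sub]

theorem mul_eq_neg_inner_smul_one_add_cross (ha : a ∈ D.ImSub) (b : A) :
    D.mul a b = (-⟪a, b⟫) • D.one + D.cross a b := by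
  rw [cross, ← re_mul_of_mem_ImSub ha b, re_add_im]

theorem mul_add_mul_swap_of_mem_ImSub (ha : a ∈ D.ImSub) (hb : b ∈ D.ImSub) :
    D.mul a b + D.mul b a = (-(2 * ⟪a, b⟫)) • D.one := by
  rw [mul_add_mul_swap, inner_one_eq_zero_of_mem_ImSub ha, inner_one_eq_zero_of_mem_ImSub hb]
  simp only [mul_zero, zero_smul, zero_add, zero_sub, neg_smul]

theorem cross_eq_neg_cross_swap (ha : a ∈ D.ImSub) (hb : b ∈ D.ImSub) :
    D.cross a b = -D.cross b a := by
  have hab := mul_eq_neg_inner_smul_one_add_cross ha b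
  have hba := mul_eq_neg_inner_smul_one_add_cross hb a
  rw [real_inner_comm] at hba
  linear_combination (norm := module) mul_add_mul_swap_of_mem_ImSub ha hb - hab - hba

theorem inner_cross_left_self (ha : a ∈ D.ImSub) (hb : b ∈ D.ImSub) : ⟪D.cross a b, a⟫ = 0 := by
  rw [cross, im, re_mul_of_mem_ImSub ha b, inner_sub_left, inner_smul_left, inner_mul_left_self,
    inner_one_eq_zero_of_mem_ImSub hb, real_inner_comm a D.one, inner_one_eq_zero_of_mem_ImSub ha]
  simp

theorem inner_cross_right_self (ha : a ∈ D.ImSub) (hb : b ∈ D.ImSub) : ⟪D.cross a b, b⟫ = 0 := by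
  rw [cross, im, re_mul_of_mem_ImSub ha b, inner_sub_left, inner_smul_left, inner_mul_right_self,
    inner_one_eq_zero_of_mem_ImSub ha, real_inner_comm b D.one, inner_one_eq_zero_of_mem_ImSub hb]
  simp

end Imaginary

end NormedDivisionAlgebra

theorem nda_cross_product_basic {A : Type*} [NormedAddCommGroup A] [InnerProductSpace ℝ A]
    (D : NormedDivisionAlgebra A) (a b : A) (ha : a ∈ D.ImSub) (hb : b ∈ D.ImSub) :
    D.cross a b = - D.cross b a ∧
      ⟪D.cross a b, a⟫ = 0 ∧
      ⟪D.cross a b, b⟫ = 0 ∧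
      D.re (D.mul a b) = (-⟪a, b⟫) • D.one ∧
      D.mul a b = (-⟪a, b⟫) • D.one + D.cross a b :=
  ⟨D.cross_eq_neg_cross_swap ha hb, D.inner_cross_left_self ha hb, D.inner_cross_right_self ha hb,
    D.re_mul_of_mem_ImSub ha b, D.mul_eq_neg_inner_smul_one_add_cross ha b⟩
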